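/- arXiv:1503.08601 — 10 statements merged into one kernel-verified Lean document; each statement's English description precedes it below -/
import Mathlib

section
/- Let M be a d-dimensional subspace of the space of m×n real matrices and let X₁*,…,X_d* ∈ M be produced by the greedy algorithm. Then for any 1 ≤ ℓ ≤ d and any linearly independent set {X₁,…,X_ℓ} ⊆ M with rank(X₁) ≤ rank(X₂) ≤ ⋯ ≤ rank(X_ℓ), it holds that rank(X_i) ≥ rank(X_i*) for every i = 1,…,ℓ. -/
/-!
Fix `i < ℓ` and let `S` be the span of the first `i` greedy matrices. The `i + 1` independent
matrices `X₀, …, Xᵢ` cannot all lie in `S`, of dimension at most `i`, so some `Xⱼ` with `j ≤ i`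
extends the first `i` greedy matrices to an independent family. Greedy minimality at step `i`
then gives `rank Xᵢ* ≤ rank Xⱼ ≤ rank Xᵢ`.
-/

/-- `Xs : Fin d → ℝ^{m×n}` is produced by the greedy algorithm for the subspace `M`:
each `Xs ℓ` lies in `M`, the first `ℓ+1` matrices are linearly independent, and `Xs ℓ`
has minimal rank among all `X ∈ M` keeping the first `ℓ` matrices together with `X`
linearly independent. -/
def GreedyProduced {m n d : ℕ} (M : Submodule ℝ (Matrix (Fin m) (Fin n) ℝ))
    (Xs : Fin d → Matrix (Fin m) (Fin n) ℝ) : Prop :=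
  (∀ i, Xs i ∈ M) ∧
  ∀ ℓ : Fin d,
    LinearIndependent ℝ (fun i : Fin (ℓ.1 + 1) => Xs (Fin.castLE ℓ.isLt i)) ∧
    ∀ X ∈ M,
      LinearIndependent ℝ
        (Fin.snoc (fun i : Fin ℓ.1 => Xs (Fin.castLE ℓ.isLt.le i)) X) →
      (Xs ℓ).rank ≤ X.rank

open Submodule Set

theorem LinearIndependent.exists_notMem_span_range {R V ι κ : Type*} [Ring R]
    [StrongRankCondition R] [AddCommGroup V] [Module R V] [Fintype ι] [Fintype κ] {v : ι → V}
    (hv : LinearIndependent R v) (f : κ → V) (hcard : Fintype.card κ < Fintype.card ι) :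
    ∃ i, v i ∉ span R (range f) := by
  classical
  by_contra! hspan
  have := linearIndependent_le_span_aux' v hv (range f) (range_subset_iff.2 hspan)
  have := Fintype.card_range_le f
  omega

namespace GreedyProduced

variable {m n d : ℕ} {M : Submodule ℝ (Matrix (Fin m) (Fin n) ℝ)}
  {Xs : Fin d → Matrix (Fin m) (Fin n) ℝ}

theorem linearIndependent_init (h : GreedyProduced M Xs) (k : Fin d) :
    LinearIndependent ℝ fun i : Fin k => Xs (Fin.castLE k.isLt.le i) :=
  (h.2 k).1.comp Fin.castSucc (Fin.castSucc_injective _)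

theorem rank_le_of_notMem_span (h : GreedyProduced M Xs) (k : Fin d)
    {X : Matrix (Fin m) (Fin n) ℝ} (hXM : X ∈ M)
    (hX : X ∉ span ℝ (range fun i : Fin k => Xs (Fin.castLE k.isLt.le i))) :
    (Xs k).rank ≤ X.rank :=
  (h.2 k).2 X hXM (linearIndependent_finSnoc.2 ⟨h.linearIndependent_init k, hX⟩)

end GreedyProduced

theorem greedy_rank_le_general {m n d : ℕ} (M : Submodule ℝ (Matrix (Fin m) (Fin n) ℝ))
    (Xstar : Fin d → Matrix (Fin m) (Fin n) ℝ)
    (hgreedy : GreedyProduced M Xstar)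
    (ℓ : ℕ) (hℓ : ℓ ≤ d)
    (X : Fin ℓ → Matrix (Fin m) (Fin n) ℝ)
    (hXM : ∀ i, X i ∈ M)
    (hli : LinearIndependent ℝ X)
    (hmono : Monotone fun i => (X i).rank) :
    ∀ i : Fin ℓ, (Xstar (Fin.castLE hℓ i)).rank ≤ (X i).rank := by
  intro i
  obtain ⟨j, hj⟩ := (hli.comp _ (Fin.castLE_injective i.isLt)).exists_notMem_span_range
    (fun k : Fin i => Xstar (Fin.castLE (Fin.castLE hℓ i).isLt.le k)) (by simp)
  calc (Xstar (Fin.castLE hℓ i)).rank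
      ≤ (X (Fin.castLE i.isLt j)).rank := hgreedy.rank_le_of_notMem_span _ (hXM _) hj
    _ ≤ (X i).rank := hmono (Fin.le_iff_val_le_val.2 (Nat.lt_succ_iff.1 j.isLt))

/-- Lemma 1: if `X₁*,…,X_d*` are produced by the greedy algorithm, then for any
`ℓ ≤ d` and any linearly independent `X₁,…,X_ℓ ∈ M` with nondecreasing ranks,
`rank (X i) ≥ rank (Xstar i)` for all `i`. -/
theorem greedy_rank_le {m n d : ℕ} (M : Submodule ℝ (Matrix (Fin m) (Fin n) ℝ))
    (hM : Module.finrank ℝ M = d)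
    (Xstar : Fin d → Matrix (Fin m) (Fin n) ℝ)
    (hgreedy : GreedyProduced M Xstar)
    (ℓ : ℕ) (hℓ1 : 1 ≤ ℓ) (hℓ : ℓ ≤ d)
    (X : Fin ℓ → Matrix (Fin m) (Fin n) ℝ)
    (hXM : ∀ i, X i ∈ M)
    (hli : LinearIndependent ℝ X)
    (hmono : Monotone fun i => (X i).rank) :
    ∀ i : Fin ℓ, (Xstar (Fin.castLE hℓ i)).rank ≤ (X i).rank :=
  greedy_rank_le_general M Xstar hgreedy ℓ hℓ X hXM hli hmono
end

section
/- Let M be a d-dimensional subspace of the space of m×n real matrices and let X₁*,…,X_d* ∈ M be produced by the greedy algorithm. Let B_ℓ = {X₁,…,X_ℓ} ⊆ M be a linearly independent set with rank(X₁) ≤ ⋯ ≤ rank(X_ℓ). Then B_ℓ is of minimal rank if and only if rank(X_i) = rank(X_i*) for every i = 1,…,ℓ. In particular, {X₁*,…,X_ℓ*} is of minimal rank. -/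
/-- A linearly independent family `X₁,…,X_ℓ ⊆ M` is of minimal rank if the sum of
the ranks of its members is minimal among all linearly independent families of
`ℓ` elements of `M`. -/
def IsMinimalRank {m n ℓ : ℕ} (M : Submodule ℝ (Matrix (Fin m) (Fin n) ℝ))
    (X : Fin ℓ → Matrix (Fin m) (Fin n) ℝ) : Prop :=
  (∀ i, X i ∈ M) ∧ LinearIndependent ℝ X ∧
  ∀ Y : Fin ℓ → Matrix (Fin m) (Fin n) ℝ,
    (∀ i, Y i ∈ M) → LinearIndependent ℝ Y →
    ∑ i, (X i).rank ≤ ∑ i, (Y i).rank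

/-!
Let `Y₁, …, Y_ℓ` be linearly independent in `M` with `rank Y₁ ≤ ⋯ ≤ rank Y_ℓ`. The matrices
`Y₁, …, Y_i` cannot all lie in the span of `X₁*, …, X_{i-1}*`, so some `Y_j` with `j ≤ i`
extends `X₁*, …, X_{i-1}*` to an independent family, and the greedy choice gives
`rank X_i* ≤ rank Y_j ≤ rank Y_i`. Summing (after sorting an arbitrary family) shows that the
greedy family is of minimal rank, and for a sorted family equality of the rank sums forces
the termwise inequalities to be equalities.
-/

open Module Submodule Set

theorem exists_notMem_span_range_of_linearIndependent {K V : Type*} [DivisionRing K]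
    [AddCommGroup V] [Module K V] {k : ℕ} {v : Fin (k + 1) → V} (hv : LinearIndependent K v)
    (w : Fin k → V) : ∃ j, v j ∉ span K (range w) := by
  by_contra! h
  have hle : span K (range v) ≤ span K (range w) := span_le.mpr (range_subset_iff.mpr h)
  have := Module.Finite.span_of_finite K (finite_range w)
  have hcard : k + 1 ≤ k := by
    calc k + 1 = finrank K (span K (range v)) := by simp [finrank_span_eq_card hv]
      _ ≤ finrank K (span K (range w)) := Submodule.finrank_mono hle
      _ ≤ k := by simpa [Set.finrank] using finrank_range_le_card (R := K) w
  omega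

namespace GreedyProduced

variable {m n d : ℕ} {M : Submodule ℝ (Matrix (Fin m) (Fin n) ℝ)}
  {Xs : Fin d → Matrix (Fin m) (Fin n) ℝ}

theorem linearIndependent_castLE (h : GreedyProduced M Xs) {ℓ : ℕ} (hℓ : ℓ ≤ d) :
    LinearIndependent ℝ fun i : Fin ℓ => Xs (Fin.castLE hℓ i) := by
  cases ℓ with
  | zero => exact linearIndependent_empty_type
  | succ k => exact (h.2 ⟨k, hℓ⟩).1

theorem rank_le_of_monotone (h : GreedyProduced M Xs) {ℓ : ℕ} (hℓ : ℓ ≤ d)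
    {Y : Fin ℓ → Matrix (Fin m) (Fin n) ℝ} (hYM : ∀ i, Y i ∈ M) (hY : LinearIndependent ℝ Y)
    (hmono : Monotone fun i => (Y i).rank) (i : Fin ℓ) :
    (Xs (Fin.castLE hℓ i)).rank ≤ (Y i).rank := by
  have hi : i.1 < d := i.isLt.trans_le hℓ
  let Xpre : Fin i.1 → Matrix (Fin m) (Fin n) ℝ := fun t => Xs (Fin.castLE hi.le t)
  obtain ⟨t, ht⟩ := exists_notMem_span_range_of_linearIndependent
    (hY.comp (Fin.castLE i.isLt) (Fin.castLE_injective _)) Xpre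
  have hsnoc : LinearIndependent ℝ (Fin.snoc Xpre (Y (Fin.castLE i.isLt t))) :=
    linearIndependent_finSnoc.mpr ⟨h.linearIndependent_castLE hi.le, ht⟩
  calc (Xs (Fin.castLE hℓ i)).rank ≤ (Y (Fin.castLE i.isLt t)).rank :=
        (h.2 ⟨i.1, hi⟩).2 _ (hYM _) hsnoc
    _ ≤ (Y i).rank := hmono (Fin.le_def.mpr (Nat.lt_succ_iff.mp t.isLt))

theorem sum_rank_le (h : GreedyProduced M Xs) {ℓ : ℕ} (hℓ : ℓ ≤ d)
    {Y : Fin ℓ → Matrix (Fin m) (Fin n) ℝ} (hYM : ∀ i, Y i ∈ M) (hY : LinearIndependent ℝ Y) :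
    ∑ i, (Xs (Fin.castLE hℓ i)).rank ≤ ∑ i, (Y i).rank := by
  let σ := Tuple.sort fun i => (Y i).rank
  calc ∑ i, (Xs (Fin.castLE hℓ i)).rank ≤ ∑ i, (Y (σ i)).rank :=
        Finset.sum_le_sum fun i _ => h.rank_le_of_monotone hℓ (fun i => hYM (σ i))
          (hY.comp σ σ.injective) (Tuple.monotone_sort fun i => (Y i).rank) i
    _ = ∑ i, (Y i).rank := Equiv.sum_comp σ fun i => (Y i).rank

theorem isMinimalRank (h : GreedyProduced M Xs) {ℓ : ℕ} (hℓ : ℓ ≤ d) :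
    IsMinimalRank M fun i : Fin ℓ => Xs (Fin.castLE hℓ i) :=
  ⟨fun _ => h.1 _, h.linearIndependent_castLE hℓ, fun _ hYM hY => h.sum_rank_le hℓ hYM hY⟩

end GreedyProduced

theorem isMinimalRank_iff_rank_eq_greedy_general {m n d : ℕ}
    (M : Submodule ℝ (Matrix (Fin m) (Fin n) ℝ))
    (Xstar : Fin d → Matrix (Fin m) (Fin n) ℝ)
    (hgreedy : GreedyProduced M Xstar)
    (ℓ : ℕ) (hℓ : ℓ ≤ d)
    (X : Fin ℓ → Matrix (Fin m) (Fin n) ℝ)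
    (hXM : ∀ i, X i ∈ M)
    (hli : LinearIndependent ℝ X)
    (hmono : Monotone fun i => (X i).rank) :
    (IsMinimalRank M X ↔ ∀ i : Fin ℓ, (X i).rank = (Xstar (Fin.castLE hℓ i)).rank) ∧
    IsMinimalRank M (fun i : Fin ℓ => Xstar (Fin.castLE hℓ i)) := by
  have hgreedyMin := hgreedy.isMinimalRank hℓ
  have hle := hgreedy.rank_le_of_monotone hℓ hXM hli hmono
  refine ⟨⟨fun hmin i => ?_, fun heq => ⟨hXM, hli, fun Y hYM hY => ?_⟩⟩, hgreedyMin⟩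
  · have hsum : ∑ i, (Xstar (Fin.castLE hℓ i)).rank = ∑ i, (X i).rank :=
      le_antisymm (Finset.sum_le_sum fun i _ => hle i) (hmin.2.2 _ hgreedyMin.1 hgreedyMin.2.1)
    exact ((Finset.sum_eq_sum_iff_of_le fun i _ => hle i).mp hsum i (Finset.mem_univ i)).symm
  · rw [Finset.sum_congr rfl fun i _ => heq i]
    exact hgreedyMin.2.2 Y hYM hY

/-- Theorem: a linearly independent family with nondecreasing ranks is of minimal
rank if and only if its ranks agree with those produced by the greedy algorithm;
in particular the first `ℓ` greedy matrices are of minimal rank. -/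
theorem isMinimalRank_iff_rank_eq_greedy {m n d : ℕ}
    (M : Submodule ℝ (Matrix (Fin m) (Fin n) ℝ))
    (hM : Module.finrank ℝ M = d)
    (Xstar : Fin d → Matrix (Fin m) (Fin n) ℝ)
    (hgreedy : GreedyProduced M Xstar)
    (ℓ : ℕ) (hℓ1 : 1 ≤ ℓ) (hℓ : ℓ ≤ d)
    (X : Fin ℓ → Matrix (Fin m) (Fin n) ℝ)
    (hXM : ∀ i, X i ∈ M)
    (hli : LinearIndependent ℝ X)
    (hmono : Monotone fun i => (X i).rank) :
    (IsMinimalRank M X ↔ ∀ i : Fin ℓ, (X i).rank = (Xstar (Fin.castLE hℓ i)).rank) ∧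
    IsMinimalRank M (fun i : Fin ℓ => Xstar (Fin.castLE hℓ i)) :=
  isMinimalRank_iff_rank_eq_greedy_general M Xstar hgreedy ℓ hℓ X hXM hli hmono
end

section
/- Let M be a d-dimensional subspace of the space of m×n real matrices. If {X₁,…,X_d} and {Y₁,…,Y_d} are two bases of M that both minimize the sum of the ranks of their elements over all bases of M, then the multiset of ranks {rank(X₁),…,rank(X_d)} coincides with the multiset {rank(Y₁),…,rank(Y_d)}; that is, after sorting both rank sequences in nondecreasing order they agree entrywise. -/
/-!
Rank is a weight on vectors, and the bases of minimal total weight are exactly the greedy ones: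
for every threshold `t`, the elements of weight at most `t` in a minimal basis `X` must span the
subspace `M_t` spanned by all elements of `M` of weight at most `t`. Otherwise some `A ∈ M` of
weight `≤ t` lies outside their span, so in its expansion in `X` it has a nonzero coefficient on
some `X i` of weight `> t`, and exchanging `X i` for `A` yields a basis of smaller total weight.
Hence the number of elements of weight at most `t` in any minimal basis is `dim M_t`, which does
not depend on the basis, and these counts determine the multiset of weights.
-/

/-- `X : Fin d → ℝ^{m×n}` is a basis of the subspace `M` minimizing the sum of the
ranks of its elements over all bases of `M`. -/
def IsMinSumRankBasis {m n d : ℕ} (M : Submodule ℝ (Matrix (Fin m) (Fin n) ℝ))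
    (X : Fin d → Matrix (Fin m) (Fin n) ℝ) : Prop :=
  (∀ i, X i ∈ M) ∧ LinearIndependent ℝ X ∧
  Submodule.span ℝ (Set.range X) = M ∧
  ∀ Y : Fin d → Matrix (Fin m) (Fin n) ℝ,
    (∀ i, Y i ∈ M) → LinearIndependent ℝ Y →
    Submodule.span ℝ (Set.range Y) = M →
    ∑ i, (X i).rank ≤ ∑ i, (Y i).rank

open Submodule Set Finset

section WeightedBasis

variable {K V ι : Type*} [Field K] [AddCommGroup V] [Module K V] [Fintype ι] {X : ι → V}

theorem LinearIndependent.exists_update_of_notMem_span_image [DecidableEq ι]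
    (hX : LinearIndependent K X) {s : Set ι} {A : V} (hA : A ∈ span K (range X))
    (hAs : A ∉ span K (X '' s)) :
    ∃ i ∉ s, LinearIndependent K (Function.update X i A) ∧
      span K (range (Function.update X i A)) = span K (range X) := by
  obtain ⟨l, rfl⟩ : A ∈ LinearMap.range (Finsupp.linearCombination K X) := by
    rwa [Finsupp.range_linearCombination]
  obtain ⟨i, hil, his⟩ := Set.not_subset.1 fun h : ↑l.support ⊆ s =>
    hAs (Finsupp.mem_span_image_iff_linearCombination K |>.2 ⟨l, h, rfl⟩)
  have hind : LinearIndependent K (Function.update X i (Finsupp.linearCombination K X l)) :=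
    hX.update i _ ⟨1, one_mem _, l,
      mem_nonZeroDivisors_of_ne_zero (Finsupp.mem_support_iff.1 hil), one_smul _ _⟩
  have : FiniteDimensional K (span K (range X)) := .span_of_finite K (finite_range X)
  refine ⟨i, his, hind, eq_of_le_of_finrank_eq ?_ ?_⟩
  · refine span_le.2 (range_subset_iff.2 fun j => ?_)
    rcases eq_or_ne j i with rfl | hj
    · simpa using hA
    · simpa [hj] using subset_span (mem_range_self j)
  · rw [finrank_span_eq_card hind, finrank_span_eq_card hX]

theorem span_weight_le_eq_of_minimal {w : V → ℕ} (hX : LinearIndependent K X)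
    (hmin : ∀ Y : ι → V, LinearIndependent K Y → span K (range Y) = span K (range X) →
      ∑ i, w (X i) ≤ ∑ i, w (Y i)) (t : ℕ) :
    span K (X '' {i | w (X i) ≤ t}) = span K {A | A ∈ span K (range X) ∧ w A ≤ t} := by
  classical
  refine le_antisymm (span_mono ?_) (span_le.2 ?_)
  · rintro _ ⟨i, hi, rfl⟩
    exact ⟨subset_span (mem_range_self i), hi⟩
  · rintro A ⟨hA, hAt⟩
    by_contra hAs
    obtain ⟨i, hi, hind, hspan⟩ := hX.exists_update_of_notMem_span_image hA hAs
    replace hi : t < w (X i) := not_le.1 hi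
    have hsum := hmin _ hind hspan
    simp only [← Function.comp_apply (f := w), Function.comp_update] at hsum
    rw [sum_update_of_mem (mem_univ i), sdiff_singleton_eq_erase,
      ← add_sum_erase _ _ (mem_univ i)] at hsum
    simp only [Function.comp_apply] at hsum
    omega

end WeightedBasis

theorem Multiset.eq_of_card_filter_le_eq {s u : Multiset ℕ}
    (h : ∀ t, card (s.filter (· ≤ t)) = card (u.filter (· ≤ t))) : s = u := by
  have hlt : ∀ a, card (s.filter (· < a)) = card (u.filter (· < a)) := by
    rintro (_ | a)
    · simp
    · simpa [Nat.lt_succ_iff] using h a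
  have hle (v : Multiset ℕ) (a : ℕ) :
      card (v.filter (· ≤ a)) = card (v.filter (· < a)) + v.count a := by
    rw [count_eq_card_filter_eq, ← card_add, filter_add_filter]
    have hor : v.filter (fun b => b < a ∨ a = b) = v.filter (· ≤ a) :=
      filter_congr fun b _ => by omega
    have hand : v.filter (fun b => b < a ∧ a = b) = 0 := filter_eq_nil.2 fun b _ => by omega
    rw [hor, hand, add_zero]
  ext a
  have := hle s a; have := hle u a; have := h a; have := hlt a
  omega

theorem Finset.univ_val_map_eq_of_card_filter_le_eq {ι κ : Type*} [Fintype ι] [Fintype κ]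
    {f : ι → ℕ} {g : κ → ℕ} (h : ∀ t, #{i | f i ≤ t} = #{j | g j ≤ t}) :
    univ.val.map f = univ.val.map g :=
  Multiset.eq_of_card_filter_le_eq fun t => by
    simp only [Multiset.filter_map, Multiset.card_map]
    exact h t

theorem IsMinSumRankBasis.card_rank_le {m n d : ℕ}
    {M : Submodule ℝ (Matrix (Fin m) (Fin n) ℝ)} {X : Fin d → Matrix (Fin m) (Fin n) ℝ}
    (hX : IsMinSumRankBasis M X) (t : ℕ) :
    #{i | (X i).rank ≤ t} = Module.finrank ℝ (span ℝ {A | A ∈ M ∧ A.rank ≤ t}) := by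
  obtain ⟨-, hind, rfl, hmin⟩ := hX
  have hmin' Y (hY : LinearIndependent ℝ Y) (hspan : span ℝ (range Y) = span ℝ (range X)) :=
    hmin Y (fun i => hspan ▸ subset_span (mem_range_self i)) hY hspan
  rw [← span_weight_le_eq_of_minimal hind hmin' t, image_eq_range]
  exact (Fintype.card_subtype _).symm.trans
    (finrank_span_eq_card (hind.comp _ Subtype.val_injective)).symm

theorem minSumRankBases_same_rank_multiset_general {m n d : ℕ}
    (M : Submodule ℝ (Matrix (Fin m) (Fin n) ℝ))
    (X Y : Fin d → Matrix (Fin m) (Fin n) ℝ)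
    (hX : IsMinSumRankBasis M X) (hY : IsMinSumRankBasis M Y) :
    Multiset.map (fun i => (X i).rank) Finset.univ.val =
      Multiset.map (fun i => (Y i).rank) Finset.univ.val :=
  Finset.univ_val_map_eq_of_card_filter_le_eq fun t => by
    rw [hX.card_rank_le t, hY.card_rank_le t]

/-- Corollary: any two bases of `M` of minimal total rank have the same multiset of
ranks. -/
theorem minSumRankBases_same_rank_multiset {m n d : ℕ}
    (M : Submodule ℝ (Matrix (Fin m) (Fin n) ℝ))
    (hM : Module.finrank ℝ M = d)
    (X Y : Fin d → Matrix (Fin m) (Fin n) ℝ)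
    (hX : IsMinSumRankBasis M X) (hY : IsMinSumRankBasis M Y) :
    Multiset.map (fun i => (X i).rank) Finset.univ.val =
      Multiset.map (fun i => (Y i).rank) Finset.univ.val :=
  minSumRankBases_same_rank_multiset_general M X Y hX hY
end

section
/- Let ε > 0 and let M₁ = diag(1, −√ε, −√ε, 0, 0, 0, 0), M₂ = diag(0, 1, 0, √ε, √ε, 0, 0), M₃ = diag(0, 0, 1, 0, 0, √ε, √ε) be 7×7 real diagonal matrices. Then every linear combination αM₁ + βM₂ + γM₃ in which at least two of the coefficients α, β, γ are nonzero has rank at least 4. In particular, the only matrices of rank at most 3 in span{M₁, M₂, M₃} are the scalar multiples of M₁, of M₂, and of M₃. -/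
/-- The three 7×7 diagonal matrices from the counterexample. -/
noncomputable def Mex1 (ε : ℝ) : Matrix (Fin 7) (Fin 7) ℝ :=
  Matrix.diagonal ![1, -Real.sqrt ε, -Real.sqrt ε, 0, 0, 0, 0]

noncomputable def Mex2 (ε : ℝ) : Matrix (Fin 7) (Fin 7) ℝ :=
  Matrix.diagonal ![0, 1, 0, Real.sqrt ε, Real.sqrt ε, 0, 0]

noncomputable def Mex3 (ε : ℝ) : Matrix (Fin 7) (Fin 7) ℝ :=
  Matrix.diagonal ![0, 0, 1, 0, 0, Real.sqrt ε, Real.sqrt ε]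

open Matrix in
lemma combo_eq_diag (ε α β γ : ℝ) :
    α • Mex1 ε + β • Mex2 ε + γ • Mex3 ε =
      Matrix.diagonal ![α, β - α * Real.sqrt ε, γ - α * Real.sqrt ε,
        β * Real.sqrt ε, β * Real.sqrt ε, γ * Real.sqrt ε, γ * Real.sqrt ε] := by
  simp only [Mex1, Mex2, Mex3, ← Matrix.diagonal_smul, Matrix.diagonal_add]
  apply congrArg Matrix.diagonal
  funext i
  fin_cases i <;>
    simp only [Pi.add_apply, Pi.smul_apply, smul_eq_mul, Matrix.cons_val_zero,
      Matrix.cons_val_one, Matrix.head_cons, Matrix.cons_val_succ,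
      show ((2:Fin 7) = (⟨1,by norm_num⟩ : Fin 6).succ) from rfl,
      show ((3:Fin 7) = (⟨2,by norm_num⟩ : Fin 6).succ) from rfl,
      show ((4:Fin 7) = (⟨3,by norm_num⟩ : Fin 6).succ) from rfl,
      show ((5:Fin 7) = (⟨4,by norm_num⟩ : Fin 6).succ) from rfl,
      show ((6:Fin 7) = (⟨5,by norm_num⟩ : Fin 6).succ) from rfl] <;>
    norm_num <;> ring

lemma four_le_card {v : Fin 7 → ℝ} (a b c d : Fin 7)
    (hcard : ({a, b, c, d} : Finset (Fin 7)).card = 4)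
    (ha : v a ≠ 0) (hb : v b ≠ 0) (hc : v c ≠ 0) (hd : v d ≠ 0) :
    4 ≤ Fintype.card {i // v i ≠ 0} := by
  classical
  rw [Fintype.card_subtype]
  calc 4 = ({a, b, c, d} : Finset (Fin 7)).card := hcard.symm
    _ ≤ _ := by
        apply Finset.card_le_card
        intro x hx
        simp only [Finset.mem_insert, Finset.mem_singleton] at hx
        simp only [Finset.mem_filter, Finset.mem_univ, true_and]
        rcases hx with rfl | rfl | rfl | rfl <;> assumption

/-- Every linear combination of `M₁, M₂, M₃` with at least two nonzero coefficients
has rank at least 4; hence the only matrices of rank at most 3 in their span are the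
scalar multiples of `M₁`, `M₂` and `M₃`. -/
theorem rank_ge_four_of_two_nonzero_coeffs (ε : ℝ) (hε : 0 < ε) :
    (∀ α β γ : ℝ,
      ((α ≠ 0 ∧ β ≠ 0) ∨ (α ≠ 0 ∧ γ ≠ 0) ∨ (β ≠ 0 ∧ γ ≠ 0)) →
      4 ≤ (α • Mex1 ε + β • Mex2 ε + γ • Mex3 ε).rank) ∧
    ∀ X ∈ Submodule.span ℝ ({Mex1 ε, Mex2 ε, Mex3 ε} :
        Set (Matrix (Fin 7) (Fin 7) ℝ)),
      X.rank ≤ 3 →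
      (∃ c : ℝ, X = c • Mex1 ε) ∨ (∃ c : ℝ, X = c • Mex2 ε) ∨
        (∃ c : ℝ, X = c • Mex3 ε) := by
  classical
  have hs : Real.sqrt ε ≠ 0 := by positivity
  have main : ∀ α β γ : ℝ,
      ((α ≠ 0 ∧ β ≠ 0) ∨ (α ≠ 0 ∧ γ ≠ 0) ∨ (β ≠ 0 ∧ γ ≠ 0)) →
      4 ≤ (α • Mex1 ε + β • Mex2 ε + γ • Mex3 ε).rank := by
    intro α β γ h
    rw [combo_eq_diag, Matrix.rank_diagonal]
    set v : Fin 7 → ℝ := ![α, β - α * Real.sqrt ε, γ - α * Real.sqrt ε,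
        β * Real.sqrt ε, β * Real.sqrt ε, γ * Real.sqrt ε, γ * Real.sqrt ε] with hv
    have h0 : v 0 = α := rfl
    have h1 : v 1 = β - α * Real.sqrt ε := rfl
    have h2 : v 2 = γ - α * Real.sqrt ε := rfl
    have h3 : v 3 = β * Real.sqrt ε := rfl
    have h4 : v 4 = β * Real.sqrt ε := rfl
    have h5 : v 5 = γ * Real.sqrt ε := rfl
    have h6 : v 6 = γ * Real.sqrt ε := rfl
    rcases h with ⟨hα, hβ⟩ | ⟨hα, hγ⟩ | ⟨hβ, hγ⟩
    · by_cases hγs : γ - α * Real.sqrt ε = 0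
      · have hγ : γ ≠ 0 := by
          intro hg
          rw [hg] at hγs
          have h' : α * Real.sqrt ε = 0 := by linarith
          exact hα ((mul_eq_zero.mp h').resolve_right hs)
        exact four_le_card 0 3 4 5 (by decide)
          (by rw [h0]; exact hα) (by rw [h3]; exact mul_ne_zero hβ hs)
          (by rw [h4]; exact mul_ne_zero hβ hs) (by rw [h5]; exact mul_ne_zero hγ hs)
      · exact four_le_card 0 2 3 4 (by decide)
          (by rw [h0]; exact hα) (by rw [h2]; exact hγs)
          (by rw [h3]; exact mul_ne_zero hβ hs) (by rw [h4]; exact mul_ne_zero hβ hs)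
    · by_cases hβs : β - α * Real.sqrt ε = 0
      · have hβ : β ≠ 0 := by
          intro hb
          rw [hb] at hβs
          have h' : α * Real.sqrt ε = 0 := by linarith
          exact hα ((mul_eq_zero.mp h').resolve_right hs)
        exact four_le_card 0 3 5 6 (by decide)
          (by rw [h0]; exact hα) (by rw [h3]; exact mul_ne_zero hβ hs)
          (by rw [h5]; exact mul_ne_zero hγ hs) (by rw [h6]; exact mul_ne_zero hγ hs)
      · exact four_le_card 0 1 5 6 (by decide)
          (by rw [h0]; exact hα) (by rw [h1]; exact hβs)
          (by rw [h5]; exact mul_ne_zero hγ hs) (by rw [h6]; exact mul_ne_zero hγ hs)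
    · exact four_le_card 3 4 5 6 (by decide)
        (by rw [h3]; exact mul_ne_zero hβ hs) (by rw [h4]; exact mul_ne_zero hβ hs)
        (by rw [h5]; exact mul_ne_zero hγ hs) (by rw [h6]; exact mul_ne_zero hγ hs)
  refine ⟨main, ?_⟩
  intro X hX hrk
  rw [Submodule.mem_span_insert] at hX
  obtain ⟨α, z, hz, rfl⟩ := hX
  rw [Submodule.mem_span_insert] at hz
  obtain ⟨β, w, hw, rfl⟩ := hz
  rw [Submodule.mem_span_singleton] at hw
  obtain ⟨γ, rfl⟩ := hw
  have hXeq : α • Mex1 ε + (β • Mex2 ε + γ • Mex3 ε)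
      = α • Mex1 ε + β • Mex2 ε + γ • Mex3 ε := (add_assoc _ _ _).symm
  rw [hXeq] at hrk ⊢
  by_cases hα : α = 0
  · by_cases hβ : β = 0
    · right; right; exact ⟨γ, by simp [hα, hβ]⟩
    · by_cases hγ : γ = 0
      · right; left; exact ⟨β, by simp [hα, hγ]⟩
      · exact absurd hrk (by
          have := main α β γ (Or.inr (Or.inr ⟨hβ, hγ⟩)); omega)
  · by_cases hβ : β = 0
    · by_cases hγ : γ = 0
      · left; exact ⟨α, by simp [hβ, hγ]⟩
      · exact absurd hrk (by
          have := main α β γ (Or.inr (Or.inl ⟨hα, hγ⟩)); omega)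
    · exact absurd hrk (by
        have := main α β γ (Or.inl ⟨hα, hβ⟩); omega)
end

section
/- Let ε > 0 and let M₁ = diag(1, −√ε, −√ε, 0, 0, 0, 0), M₂ = diag(0, 1, 0, √ε, √ε, 0, 0), M₃ = diag(0, 0, 1, 0, 0, √ε, √ε) be 7×7 real diagonal matrices, and set X = M₁ + √ε·M₂ + √ε·M₃ = diag(1, 0, 0, ε, ε, ε, ε). Then rank(X) = 5, rank(M_i) = 3 for i = 1, 2, 3, ‖X‖_*/‖X‖_F = (1 + 4ε)/√(1 + 4ε²), ‖M_i‖_*/‖M_i‖_F = (1 + 2√ε)/√(1 + 2ε) for each i, and for all sufficiently small ε > 0 one has ‖X‖_*/‖X‖_F < ‖M_i‖_*/‖M_i‖_F. Hence the minimizer of the normalized nuclear norm over span{M₁, M₂, M₃} is not attained at a matrix of minimal rank. -/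
/-- Frobenius norm of a real matrix. -/
noncomputable def frobNorm {m n : ℕ} (X : Matrix (Fin m) (Fin n) ℝ) : ℝ :=
  Real.sqrt (∑ i, ∑ j, (X i j) ^ 2)

/-- Nuclear norm of a real matrix: the sum of its singular values, i.e. of the
square roots of the eigenvalues of `Xᵀ * X`. -/
noncomputable def nuclearNorm {m n : ℕ} (X : Matrix (Fin m) (Fin n) ℝ) : ℝ :=
  ∑ i, Real.sqrt ((show (X.transpose * X).IsHermitian by
    simpa [Matrix.conjTranspose_eq_transpose_of_trivial] using
      Matrix.isHermitian_conjTranspose_mul_self X).eigenvalues i)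

/-- The combination `X = M₁ + √ε·M₂ + √ε·M₃`. -/
noncomputable def Xex (ε : ℝ) : Matrix (Fin 7) (Fin 7) ℝ :=
  Mex1 ε + Real.sqrt ε • Mex2 ε + Real.sqrt ε • Mex3 ε

/-!
All matrices involved are diagonal, so their singular values are the absolute values of the
diagonal entries: `XᵀX` is diagonal with entries `wᵢ²`, whose characteristic polynomial pins down
the eigenvalues as a multiset. The Frobenius norms of `X` and of each `Mᵢ` are `1 + O(ε)`, while
the nuclear norms are `1 + 4ε` and `1 + 2√ε`; since `√ε ≫ ε` for small `ε`, the combination `X`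
of larger rank has the smaller normalized nuclear norm (`ε < 1/9` already suffices).
-/

open Matrix Polynomial

namespace Matrix.IsHermitian

variable {n : Type*} [Fintype n] [DecidableEq n] {A : Matrix n n ℝ} (hA : A.IsHermitian)
  {d : n → ℝ}

theorem map_eigenvalues_eq_of_eq_diagonal (hAd : A = diagonal d) :
    Finset.univ.val.map hA.eigenvalues = Finset.univ.val.map d := by
  have h := hA.roots_charpoly_eq_eigenvalues
  rw [show A.charpoly = ∏ i, (X - C (d i)) by rw [← charpoly_diagonal, hAd],
    roots_prod _ _ (by simp [Finset.prod_ne_zero_iff, X_sub_C_ne_zero])] at h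
  simpa using h.symm

theorem sum_comp_eigenvalues_of_eq_diagonal {M : Type*} [AddCommMonoid M] (f : ℝ → M)
    (hAd : A = diagonal d) : ∑ i, f (hA.eigenvalues i) = ∑ i, f (d i) := by
  have h := congrArg (fun s => (s.map f).sum) (hA.map_eigenvalues_eq_of_eq_diagonal hAd)
  simpa only [Multiset.map_map, Function.comp_def, ← Finset.sum_eq_multiset_sum] using h

end Matrix.IsHermitian

theorem nuclearNorm_diagonal {k : ℕ} (w : Fin k → ℝ) :
    nuclearNorm (diagonal w) = ∑ i, |w i| := by
  have hsq : (diagonal w)ᵀ * diagonal w = diagonal (fun i => w i ^ 2) := by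
    simp [diagonal_mul_diagonal, sq]
  simp only [nuclearNorm, IsHermitian.sum_comp_eigenvalues_of_eq_diagonal _ _ hsq,
    Real.sqrt_sq_eq_abs]

theorem frobNorm_diagonal {k : ℕ} (w : Fin k → ℝ) :
    frobNorm (diagonal w) = √(∑ i, w i ^ 2) := by
  simp [frobNorm, diagonal_apply]

theorem rank_diagonal_eq_card {K n : Type*} [Field K] [Fintype n] [DecidableEq n]
    {w : n → K} (s : Finset n) (hs : ∀ i, w i ≠ 0 ↔ i ∈ s) : (diagonal w).rank = s.card := by
  classical
  rw [rank_diagonal]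
  exact Fintype.card_of_subtype s fun i => (hs i).symm

section

variable {ε : ℝ}

theorem Xex_eq (hε : 0 ≤ ε) : Xex ε = diagonal ![1, 0, 0, ε, ε, ε, ε] := by
  simp only [Xex, Mex1, Mex2, Mex3, ← diagonal_smul, diagonal_add]
  congr 1
  ext i
  fin_cases i <;> simp [Real.mul_self_sqrt hε]

theorem rank_Xex (hε : 0 < ε) : (Xex ε).rank = 5 := by
  rw [Xex_eq hε.le, rank_diagonal_eq_card {0, 3, 4, 5, 6}]
  · rfl
  · intro i; fin_cases i <;> simp [hε.ne']

theorem rank_Mex1 (hε : 0 < ε) : (Mex1 ε).rank = 3 := by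
  rw [Mex1, rank_diagonal_eq_card {0, 1, 2}]
  · rfl
  · intro i; fin_cases i <;> simp [(Real.sqrt_pos.2 hε).ne']

theorem rank_Mex2 (hε : 0 < ε) : (Mex2 ε).rank = 3 := by
  rw [Mex2, rank_diagonal_eq_card {1, 3, 4}]
  · rfl
  · intro i; fin_cases i <;> simp [(Real.sqrt_pos.2 hε).ne']

theorem rank_Mex3 (hε : 0 < ε) : (Mex3 ε).rank = 3 := by
  rw [Mex3, rank_diagonal_eq_card {2, 5, 6}]
  · rfl
  · intro i; fin_cases i <;> simp [(Real.sqrt_pos.2 hε).ne']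

theorem nuclearNorm_div_frobNorm_Xex (hε : 0 ≤ ε) :
    nuclearNorm (Xex ε) / frobNorm (Xex ε) = (1 + 4 * ε) / √(1 + 4 * ε ^ 2) := by
  rw [Xex_eq hε, nuclearNorm_diagonal, frobNorm_diagonal]
  simp only [Fin.sum_univ_seven, cons_val, abs_one, abs_zero, abs_of_nonneg hε, one_pow,
    zero_pow two_ne_zero, add_zero]
  ring_nf

theorem nuclearNorm_div_frobNorm_Mex1 (hε : 0 ≤ ε) :
    nuclearNorm (Mex1 ε) / frobNorm (Mex1 ε) = (1 + 2 * √ε) / √(1 + 2 * ε) := by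
  rw [Mex1, nuclearNorm_diagonal, frobNorm_diagonal]
  simp only [Fin.sum_univ_seven, cons_val, abs_one, abs_zero, abs_neg,
    abs_of_nonneg (Real.sqrt_nonneg ε), one_pow, zero_pow two_ne_zero, neg_sq, Real.sq_sqrt hε,
    add_zero]
  ring_nf

theorem nuclearNorm_div_frobNorm_Mex2 (hε : 0 ≤ ε) :
    nuclearNorm (Mex2 ε) / frobNorm (Mex2 ε) = (1 + 2 * √ε) / √(1 + 2 * ε) := by
  rw [Mex2, nuclearNorm_diagonal, frobNorm_diagonal]
  simp only [Fin.sum_univ_seven, cons_val, abs_one, abs_zero, abs_of_nonneg (Real.sqrt_nonneg ε),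
    one_pow, zero_pow two_ne_zero, Real.sq_sqrt hε, add_zero, zero_add]
  ring_nf

theorem nuclearNorm_div_frobNorm_Mex3 (hε : 0 ≤ ε) :
    nuclearNorm (Mex3 ε) / frobNorm (Mex3 ε) = (1 + 2 * √ε) / √(1 + 2 * ε) := by
  rw [Mex3, nuclearNorm_diagonal, frobNorm_diagonal]
  simp only [Fin.sum_univ_seven, cons_val, abs_one, abs_zero, abs_of_nonneg (Real.sqrt_nonneg ε),
    one_pow, zero_pow two_ne_zero, Real.sq_sqrt hε, add_zero, zero_add]
  ring_nf

theorem one_add_four_mul_div_sqrt_lt (hε : 0 < ε) (hε₀ : ε < 1 / 9) :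
    (1 + 4 * ε) / √(1 + 4 * ε ^ 2) < (1 + 2 * √ε) / √(1 + 2 * ε) := by
  have hs : 0 < √ε := Real.sqrt_pos.2 hε
  have hss : √ε * √ε = ε := Real.mul_self_sqrt hε.le
  have hs₃ : √ε < 1 / 3 := by nlinarith
  calc (1 + 4 * ε) / √(1 + 4 * ε ^ 2)
      ≤ 1 + 4 * ε := div_le_self (by positivity) (Real.one_le_sqrt.2 (by nlinarith))
    _ < (1 + 2 * √ε) / (1 + ε) := by
        rw [lt_div_iff₀ (by positivity)]
        -- with `s = √ε` this reads `s (2 - 5s - 4s³) > 0`, true for `s < 1/3`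
        nlinarith [mul_pos hs hs, mul_pos (mul_pos hs hs) hs]
    _ ≤ (1 + 2 * √ε) / √(1 + 2 * ε) := by
        gcongr
        exact Real.sqrt_le_iff.2 ⟨by positivity, by nlinarith⟩

end

/-- `X = diag(1,0,0,ε,ε,ε,ε)` has rank 5, each `Mᵢ` has rank 3, their normalized
nuclear norms are `(1+4ε)/√(1+4ε²)` and `(1+2√ε)/√(1+2ε)` respectively, and for all
sufficiently small `ε > 0` the normalized nuclear norm of `X` is strictly smaller
than that of each `Mᵢ`. -/
theorem normalized_nuclearNorm_counterexample :
    (∀ ε : ℝ, 0 < ε →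
      Xex ε = Matrix.diagonal ![1, 0, 0, ε, ε, ε, ε] ∧
      (Xex ε).rank = 5 ∧
      (Mex1 ε).rank = 3 ∧ (Mex2 ε).rank = 3 ∧ (Mex3 ε).rank = 3 ∧
      nuclearNorm (Xex ε) / frobNorm (Xex ε)
        = (1 + 4 * ε) / Real.sqrt (1 + 4 * ε ^ 2) ∧
      nuclearNorm (Mex1 ε) / frobNorm (Mex1 ε)
        = (1 + 2 * Real.sqrt ε) / Real.sqrt (1 + 2 * ε) ∧
      nuclearNorm (Mex2 ε) / frobNorm (Mex2 ε)
        = (1 + 2 * Real.sqrt ε) / Real.sqrt (1 + 2 * ε) ∧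
      nuclearNorm (Mex3 ε) / frobNorm (Mex3 ε)
        = (1 + 2 * Real.sqrt ε) / Real.sqrt (1 + 2 * ε)) ∧
    ∃ ε₀ : ℝ, 0 < ε₀ ∧ ∀ ε : ℝ, 0 < ε → ε < ε₀ →
      nuclearNorm (Xex ε) / frobNorm (Xex ε) <
        nuclearNorm (Mex1 ε) / frobNorm (Mex1 ε) := by
  refine ⟨fun ε hε => ⟨Xex_eq hε.le, rank_Xex hε, rank_Mex1 hε, rank_Mex2 hε, rank_Mex3 hε,
      nuclearNorm_div_frobNorm_Xex hε.le, nuclearNorm_div_frobNorm_Mex1 hε.le,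
      nuclearNorm_div_frobNorm_Mex2 hε.le, nuclearNorm_div_frobNorm_Mex3 hε.le⟩,
    1 / 9, by norm_num, fun ε hε hε₀ => ?_⟩
  rw [nuclearNorm_div_frobNorm_Xex hε.le, nuclearNorm_div_frobNorm_Mex1 hε.le]
  exact one_add_four_mul_div_sqrt_lt hε hε₀
end

section
/- Let τ > 0, let k ≥ 1, and let σ₁, …, σ_k be nonnegative real numbers, not all zero. Suppose there exists c > 0 such that max(σ_i − τ, 0) = c·σ_i for every i = 1, …, k. Then c < 1 and every nonzero σ_i equals τ/(1 − c); in particular all nonzero σ_i are equal. (This shows that the only fixed points of the singular value shrinkage operator combined with normalization are matrices whose nonzero singular values are all identical.) -/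
/-- Fixed points of soft thresholding combined with normalization: if
`max (σᵢ − τ, 0) = c·σᵢ` for all `i` with `c > 0`, then `c < 1` and every nonzero
`σᵢ` equals `τ/(1−c)`; in particular all nonzero `σᵢ` are equal. -/
theorem softThreshold_fixedPoint (τ : ℝ) (hτ : 0 < τ) (k : ℕ) (hk : 1 ≤ k)
    (σ : Fin k → ℝ) (hσ : ∀ i, 0 ≤ σ i) (hne : ∃ i, σ i ≠ 0)
    (c : ℝ) (hc : 0 < c)
    (hfix : ∀ i, max (σ i - τ) 0 = c * σ i) :
    c < 1 ∧ (∀ i, σ i ≠ 0 → σ i = τ / (1 - c)) ∧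
    ∀ i j, σ i ≠ 0 → σ j ≠ 0 → σ i = σ j := by
  have key : ∀ i, σ i ≠ 0 → σ i * (1 - c) = τ ∧ 0 < 1 - c := by
    intro i hi
    have hpos : 0 < σ i := lt_of_le_of_ne (hσ i) (Ne.symm hi)
    have hcσ : 0 < c * σ i := mul_pos hc hpos
    have hmax := hfix i
    have hgt : 0 < σ i - τ := by
      by_contra h
      push_neg at h
      rw [max_eq_right h] at hmax
      linarith
    rw [max_eq_left (le_of_lt hgt)] at hmax
    constructor
    · ring_nf; linarith
    · nlinarith
  obtain ⟨i0, hi0⟩ := hne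
  have hc1 := (key i0 hi0).2
  refine ⟨by linarith, fun i hi => ?_, fun i j hi hj => ?_⟩
  · have h := (key i hi).1
    field_simp
    linarith
  · have h1 := (key i hi).1
    have h2 := (key j hj).1
    have : (σ i - σ j) * (1 - c) = 0 := by ring_nf; nlinarith
    rcases mul_eq_zero.1 this with h | h
    · linarith
    · linarith
end

section
/- Let M be a d-dimensional subspace of ℝ^{m×n} and let X* ∈ M have rank r. Assume there exists a (d−1)-dimensional subspace M̃ ⊆ M with M = span{X*} ⊕ M̃ such that for every X̃ ∈ M̃ the column spaces of X* and X̃ intersect trivially and the column spaces of X*ᵀ and X̃ᵀ intersect trivially. Let P ∈ ℝ^{m×m} and Q ∈ ℝ^{n×n} be the orthogonal projections onto the orthogonal complements of the column space of X* and of the column space of X*ᵀ, respectively. Then every X ∈ M satisfying P X Q = 0 is a scalar multiple of X*; that is, T_{X*}R_r ∩ M = span{X*}. -/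
/-!
Write `X = c • X* + X̃` with `X̃ ∈ M̃`. Since `P X* = 0 = X* Q`, the hypothesis reduces to
`P X̃ Q = 0`: the columns of `X̃ Q` lie in `ker P = col X*` and in `col X̃`, so `X̃ Q = 0`.
By symmetry of `Q` the columns of `X̃ᵀ` then lie in `ker Q = col X*ᵀ` and in `col X̃ᵀ`,
so `X̃ = 0`.
-/

open Matrix

namespace Matrix

variable {R : Type*} [CommSemiring R] {k l m n : Type*} [Fintype m] [Fintype n]

theorem mul_eq_zero_iff_range_le_ker (A : Matrix l m R) (B : Matrix m n R) :
    A * B = 0 ↔ LinearMap.range B.mulVecLin ≤ LinearMap.ker A.mulVecLin := by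
  classical
  rw [LinearMap.range_le_ker_iff, ← mulVecLin_mul]
  exact toLin'.map_eq_zero_iff.symm

theorem range_mulVecLin_mul_le (A : Matrix l m R) (B : Matrix m n R) :
    LinearMap.range (A * B).mulVecLin ≤ LinearMap.range A.mulVecLin := by
  rw [mulVecLin_mul]
  exact LinearMap.range_comp_le_range _ _

theorem eq_zero_of_mul_eq_zero_of_disjoint_range [Fintype k] {A : Matrix l m R}
    {B : Matrix m n R} {C : Matrix m k R}
    (hker : LinearMap.ker A.mulVecLin ≤ LinearMap.range C.mulVecLin)
    (hdisj : Disjoint (LinearMap.range C.mulVecLin) (LinearMap.range B.mulVecLin))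
    (hAB : A * B = 0) : B = 0 := by
  classical
  have hB : LinearMap.range B.mulVecLin ≤ LinearMap.range C.mulVecLin :=
    ((mul_eq_zero_iff_range_le_ker A B).1 hAB).trans hker
  exact toLin'.map_eq_zero_iff.1 (LinearMap.range_eq_bot.1 (hdisj.symm.eq_bot_of_le hB))

end Matrix

theorem nontangential_of_trivial_intersections_general {m n : ℕ}
    (M : Submodule ℝ (Matrix (Fin m) (Fin n) ℝ))
    (Xs : Matrix (Fin m) (Fin n) ℝ)
    (Mt : Submodule ℝ (Matrix (Fin m) (Fin n) ℝ))
    (hsup : Submodule.span ℝ {Xs} ⊔ Mt = M)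
    (hcol : ∀ Xt ∈ Mt,
      LinearMap.range Xs.mulVecLin ⊓ LinearMap.range Xt.mulVecLin = ⊥)
    (hrow : ∀ Xt ∈ Mt,
      LinearMap.range Xsᵀ.mulVecLin ⊓ LinearMap.range Xtᵀ.mulVecLin = ⊥)
    (P : Matrix (Fin m) (Fin m) ℝ) (Q : Matrix (Fin n) (Fin n) ℝ)
    (hPker : ∀ v : Fin m → ℝ, P.mulVec v = 0 ↔ v ∈ LinearMap.range Xs.mulVecLin)
    (hQsymm : Qᵀ = Q)
    (hQker : ∀ v : Fin n → ℝ, Q.mulVec v = 0 ↔ v ∈ LinearMap.range Xsᵀ.mulVecLin) :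
    ∀ X ∈ M, P * X * Q = 0 → ∃ c : ℝ, X = c • Xs := by
  intro X hX hPXQ
  have hPker' : LinearMap.ker P.mulVecLin = LinearMap.range Xs.mulVecLin := Submodule.ext hPker
  have hQker' : LinearMap.ker Q.mulVecLin = LinearMap.range Xsᵀ.mulVecLin := Submodule.ext hQker
  obtain ⟨_, hc, t, ht, rfl⟩ := Submodule.mem_sup.mp (hsup ▸ hX)
  obtain ⟨c, rfl⟩ := Submodule.mem_span_singleton.mp hc
  have hPXs : P * Xs = 0 := (mul_eq_zero_iff_range_le_ker _ _).2 hPker'.ge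
  have hPtQ : P * (t * Q) = 0 := by
    rw [← Matrix.mul_assoc, ← hPXQ]
    simp [Matrix.mul_add, hPXs]
  have htQ : t * Q = 0 := eq_zero_of_mul_eq_zero_of_disjoint_range hPker'.le
    ((disjoint_iff.2 (hcol t ht)).mono_right (range_mulVecLin_mul_le t Q)) hPtQ
  have htT : tᵀ = 0 := eq_zero_of_mul_eq_zero_of_disjoint_range hQker'.le
    (disjoint_iff.2 (hrow t ht)) (by rw [← hQsymm, ← transpose_mul, htQ, transpose_zero])
  exact ⟨c, by rw [transpose_eq_zero.1 htT, add_zero]⟩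

/-- Sufficient condition for the nontangential intersection condition: if
`M = span{X*} ⊕ M̃` with `dim M̃ = d − 1` and every `X̃ ∈ M̃` has column space and row
space intersecting those of `X*` trivially, then every `X ∈ M` with `P X Q = 0`
(`P`, `Q` the orthogonal projections onto the orthogonal complements of the column
spaces of `X*` and `X*ᵀ`) is a scalar multiple of `X*`. -/
theorem nontangential_of_trivial_intersections {m n d : ℕ}
    (M : Submodule ℝ (Matrix (Fin m) (Fin n) ℝ))
    (hM : Module.finrank ℝ M = d)
    (Xs : Matrix (Fin m) (Fin n) ℝ) (hXsM : Xs ∈ M)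
    (r : ℕ) (hr : Xs.rank = r)
    (Mt : Submodule ℝ (Matrix (Fin m) (Fin n) ℝ))
    (hMt : Module.finrank ℝ Mt = d - 1)
    (hsup : Submodule.span ℝ {Xs} ⊔ Mt = M)
    (hdisj : Disjoint (Submodule.span ℝ ({Xs} : Set (Matrix (Fin m) (Fin n) ℝ))) Mt)
    (hcol : ∀ Xt ∈ Mt,
      LinearMap.range Xs.mulVecLin ⊓ LinearMap.range Xt.mulVecLin = ⊥)
    (hrow : ∀ Xt ∈ Mt,
      LinearMap.range Xsᵀ.mulVecLin ⊓ LinearMap.range Xtᵀ.mulVecLin = ⊥)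
    (P : Matrix (Fin m) (Fin m) ℝ) (Q : Matrix (Fin n) (Fin n) ℝ)
    (hPsymm : Pᵀ = P) (hPidem : P * P = P)
    (hPker : ∀ v : Fin m → ℝ, P.mulVec v = 0 ↔ v ∈ LinearMap.range Xs.mulVecLin)
    (hQsymm : Qᵀ = Q) (hQidem : Q * Q = Q)
    (hQker : ∀ v : Fin n → ℝ, Q.mulVec v = 0 ↔ v ∈ LinearMap.range Xsᵀ.mulVecLin) :
    ∀ X ∈ M, P * X * Q = 0 → ∃ c : ℝ, X = c • Xs :=
  nontangential_of_trivial_intersections_general M Xs Mt hsup hcol hrow P Q hPker hQsymm hQker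
end

section
/- Let a₁b₁ᵀ, …, a_d b_dᵀ be a rank-one basis of a subspace M ⊆ ℝ^{m×n}, where a_ℓ ∈ ℝ^m and b_ℓ ∈ ℝ^n, and assume that the matrices A = [a₁ ⋯ a_d] ∈ ℝ^{m×d} and B = [b₁ ⋯ b_d] ∈ ℝ^{n×d} both have full column rank d. Then for each ℓ the nontangential intersection condition holds at X* = a_ℓ b_ℓᵀ: every X ∈ M satisfying P_ℓ X Q_ℓ = 0 is a scalar multiple of a_ℓ b_ℓᵀ, where P_ℓ ∈ ℝ^{m×m} and Q_ℓ ∈ ℝ^{n×n} are the orthogonal projections onto the orthogonal complements of span{a_ℓ} and span{b_ℓ}, respectively. -/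
open Matrix

lemma aux_conj_vecMulVec {m n : ℕ} (P : Matrix (Fin m) (Fin m) ℝ)
    (Q : Matrix (Fin n) (Fin n) ℝ) (hQsymm : Qᵀ = Q)
    (u : Fin m → ℝ) (v : Fin n → ℝ) :
    P * Matrix.vecMulVec u v * Q = Matrix.vecMulVec (P.mulVec u) (Q.mulVec v) := by
  ext i j
  simp only [Matrix.mul_apply, Matrix.vecMulVec_apply, Matrix.mulVec, dotProduct,
    Finset.sum_mul, Finset.mul_sum]
  refine Finset.sum_congr rfl fun x _ => Finset.sum_congr rfl fun s _ => ?_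
  have h : Q j x = Q x j := congrFun (congrFun hQsymm x) j
  rw [h]; ring

lemma aux_vecMulVec_mulVec {m n : ℕ} (u : Fin m → ℝ) (v : Fin n → ℝ) (w : Fin n → ℝ) :
    (Matrix.vecMulVec u v).mulVec w = (v ⬝ᵥ w) • u := by
  ext i
  simp only [Matrix.mulVec, Matrix.vecMulVec_apply, dotProduct, Pi.smul_apply,
    smul_eq_mul, Finset.sum_mul]
  exact Finset.sum_congr rfl fun k _ => by ring

lemma aux_sum_mulVec {m n d : ℕ} (A : Fin d → Matrix (Fin m) (Fin n) ℝ) (w : Fin n → ℝ) :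
    (∑ k, A k) *ᵥ w = ∑ k, (A k) *ᵥ w := by
  ext i
  simp only [Matrix.mulVec, dotProduct, Finset.sum_apply, Matrix.sum_apply,
    Finset.sum_mul]
  exact Finset.sum_comm

/-- If `a₁b₁ᵀ,…,a_d b_dᵀ` is a rank-one basis of `M` with the factor matrices
`A = [a₁ ⋯ a_d]` and `B = [b₁ ⋯ b_d]` of full column rank (i.e. the families `a`
and `b` are linearly independent), then the nontangential intersection condition
holds at each basis element `X* = a_ℓ b_ℓᵀ`: every `X ∈ M` with `P_ℓ X Q_ℓ = 0` is
a scalar multiple of `a_ℓ b_ℓᵀ`, where `P_ℓ`, `Q_ℓ` are the orthogonal projections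
onto the orthogonal complements of `span{a_ℓ}` and `span{b_ℓ}`. -/
theorem nontangential_of_fullRank_factors {m n d : ℕ}
    (a : Fin d → Fin m → ℝ) (b : Fin d → Fin n → ℝ)
    (M : Submodule ℝ (Matrix (Fin m) (Fin n) ℝ))
    (hbasis_li : LinearIndependent ℝ (fun ℓ => Matrix.vecMulVec (a ℓ) (b ℓ)))
    (hbasis_span :
      Submodule.span ℝ (Set.range fun ℓ => Matrix.vecMulVec (a ℓ) (b ℓ)) = M)
    (hrank1 : ∀ ℓ, (Matrix.vecMulVec (a ℓ) (b ℓ)).rank = 1)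
    (hA : LinearIndependent ℝ a) (hB : LinearIndependent ℝ b)
    (ℓ : Fin d)
    (P : Matrix (Fin m) (Fin m) ℝ) (Q : Matrix (Fin n) (Fin n) ℝ)
    (hPsymm : Pᵀ = P) (hPidem : P * P = P)
    (hPker : ∀ v : Fin m → ℝ, P.mulVec v = 0 ↔ ∃ c : ℝ, v = c • a ℓ)
    (hQsymm : Qᵀ = Q) (hQidem : Q * Q = Q)
    (hQker : ∀ v : Fin n → ℝ, Q.mulVec v = 0 ↔ ∃ c : ℝ, v = c • b ℓ) :
    ∀ X ∈ M, P * X * Q = 0 → ∃ c : ℝ, X = c • Matrix.vecMulVec (a ℓ) (b ℓ) := by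
  intro X hX hPXQ
  rw [← hbasis_span, Submodule.mem_span_range_iff_exists_fun] at hX
  obtain ⟨c, hc⟩ := hX
  -- key: every coefficient with k ≠ ℓ vanishes
  have hQb : ∀ k, k ≠ ℓ → Q.mulVec (b k) ≠ 0 := by
    intro k hk h0
    obtain ⟨t, ht⟩ := (hQker (b k)).mp h0
    have := Fintype.linearIndependent_iff.mp hB
      (fun j => if j = k then (1 : ℝ) else if j = ℓ then -t else 0) ?_ k
    · simp at this
    · rw [Finset.sum_eq_add_of_mem k ℓ (Finset.mem_univ _) (Finset.mem_univ _) hk ?_]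
      · simp [hk, Ne.symm hk, ht]
      · intro j _ hj
        simp [hj.1, hj.2]
  have hsum : ∑ k, c k • Matrix.vecMulVec (P.mulVec (a k)) (Q.mulVec (b k)) = 0 := by
    calc ∑ k, c k • Matrix.vecMulVec (P.mulVec (a k)) (Q.mulVec (b k))
        = P * (∑ k, c k • Matrix.vecMulVec (a k) (b k)) * Q := by
          rw [Matrix.mul_sum, Matrix.sum_mul]
          refine Finset.sum_congr rfl fun k _ => ?_
          rw [Matrix.mul_smul, Matrix.smul_mul, aux_conj_vecMulVec P Q hQsymm]
      _ = 0 := by rw [hc]; exact hPXQ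
  have hczero : ∀ k, k ≠ ℓ → c k = 0 := by
    intro j hj
    set w := Q.mulVec (b j) with hw
    have happ : ∑ k, (c k * ((Q.mulVec (b k)) ⬝ᵥ w)) • (P.mulVec (a k)) = 0 := by
      have h1 := congrArg (fun Y : Matrix (Fin m) (Fin n) ℝ => Y.mulVec w) hsum
      simp only [Matrix.zero_mulVec] at h1
      rw [aux_sum_mulVec] at h1
      simpa [Matrix.smul_mulVec, aux_vecMulVec_mulVec, smul_smul] using h1
    have hPsum : P.mulVec (∑ k, (c k * ((Q.mulVec (b k)) ⬝ᵥ w)) • (a k)) = 0 := by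
      have h2 : P *ᵥ (∑ k, (c k * ((Q.mulVec (b k)) ⬝ᵥ w)) • (a k))
          = ∑ k, (c k * ((Q.mulVec (b k)) ⬝ᵥ w)) • (P *ᵥ a k) := by
        rw [show (P *ᵥ ∑ k, (c k * ((Q.mulVec (b k)) ⬝ᵥ w)) • (a k))
            = P.mulVecLin (∑ k, (c k * ((Q.mulVec (b k)) ⬝ᵥ w)) • (a k)) from rfl, map_sum]
        simp [Matrix.mulVecLin_apply]
      rw [h2]; exact happ
    obtain ⟨t, ht⟩ := (hPker _).mp hPsum
    have hli := Fintype.linearIndependent_iff.mp hA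
      (fun k => (c k * ((Q.mulVec (b k)) ⬝ᵥ w)) - (if k = ℓ then t else 0)) ?_ j
    · rw [if_neg hj, sub_zero] at hli
      have hne : (Q.mulVec (b j)) ⬝ᵥ w ≠ 0 := by
        rw [hw]
        simpa [dotProduct_self_eq_zero] using hQb j hj
      exact (mul_eq_zero.mp hli).resolve_right hne
    · simp only [sub_smul, Finset.sum_sub_distrib, ht, ite_smul, zero_smul,
        Finset.sum_ite_eq', Finset.mem_univ, if_true, sub_self]
  refine ⟨c ℓ, ?_⟩
  rw [← hc, Finset.sum_eq_single ℓ]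
  · intro k _ hk; rw [hczero k hk, zero_smul]
  · intro h; exact absurd (Finset.mem_univ ℓ) h
end

section
/- Let H be a real inner product space and let X*, Y ∈ H with ‖X*‖ = 1, Y ≠ 0, and ‖Y − X*‖ < 1. Let φ ∈ [0, π/2) be defined by sin φ = ‖Y − X*‖. Then ‖Y/‖Y‖ − X*‖ ≤ (1/cos φ)·‖Y − X*‖; equivalently, ‖Y/‖Y‖ − X*‖ ≤ ‖Y − X*‖ / √(1 − ‖Y − X*‖²). -/
/-!
Write `Y = r • u` with `r = ‖Y‖` and `u` a unit vector, and let `c = ⟪u, X*⟫`. Then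
`‖Y - X*‖² = (r - c)² + (1 - c²)`, so `1 - c² ≤ ‖Y - X*‖² < 1`, and `c > 0` because for `c ≤ 0`
the right-hand side is at least `1`. Hence `c² ≥ 1 - ‖Y - X*‖²`, and
`‖u - X*‖² = 2 - 2c ≤ (1 - c²) / c² ≤ ‖Y - X*‖² / (1 - ‖Y - X*‖²)`, the middle step being
`2c² ≤ 1 + c` on `[0, 1]`.
-/

open Real RealInnerProductSpace

section UnitVectors

variable {E : Type*} [SeminormedAddCommGroup E] [InnerProductSpace ℝ E] {u x : E}

lemma norm_smul_sub_sq_of_norm_eq_one (hu : ‖u‖ = 1) (hx : ‖x‖ = 1) (t : ℝ) :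
    ‖t • u - x‖ ^ 2 = (t - ⟪u, x⟫) ^ 2 + (1 - ⟪u, x⟫ ^ 2) := by
  rw [norm_sub_sq_real, norm_smul, real_inner_smul_left, hu, hx, norm_eq_abs, mul_one, sq_abs]
  ring

lemma two_sub_two_mul_le_div_one_sub_sq {c ε : ℝ} (hc0 : 0 ≤ c) (hc1 : c ≤ 1) (hε : ε ^ 2 < 1)
    (h : 1 - c ^ 2 ≤ ε ^ 2) : 2 - 2 * c ≤ ε ^ 2 / (1 - ε ^ 2) := by
  rw [le_div_iff₀ (by linarith)]
  nlinarith [mul_le_mul_of_nonneg_left h (by linarith : 0 ≤ 2 * (1 - c)),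
    mul_nonneg (mul_nonneg (sub_nonneg.2 hc1) (sub_nonneg.2 hc1)) (by linarith : 0 ≤ 2 * c + 1)]

lemma norm_sub_sq_le_of_norm_smul_sub_le (hu : ‖u‖ = 1) (hx : ‖x‖ = 1) {r ε : ℝ} (hr : 0 ≤ r)
    (hε : ε < 1) (h : ‖r • u - x‖ ≤ ε) : ‖u - x‖ ^ 2 ≤ ε ^ 2 / (1 - ε ^ 2) := by
  have hε0 : 0 ≤ ε := (norm_nonneg _).trans h
  have hdist : (r - ⟪u, x⟫) ^ 2 + (1 - ⟪u, x⟫ ^ 2) ≤ ε ^ 2 := by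
    rw [← norm_smul_sub_sq_of_norm_eq_one hu hx]
    exact pow_le_pow_left₀ (norm_nonneg _) h 2
  have hunit : ‖u - x‖ ^ 2 = 2 - 2 * ⟪u, x⟫ := by
    rw [← one_smul ℝ u, norm_smul_sub_sq_of_norm_eq_one hu hx, one_smul]
    ring
  have hc1 : ⟪u, x⟫ ≤ 1 := by simpa [hu, hx] using real_inner_le_norm u x
  have hc0 : 0 ≤ ⟪u, x⟫ := by
    by_contra! hneg
    nlinarith [mul_nonneg hr (neg_nonneg.2 hneg.le)]
  rw [hunit]
  exact two_sub_two_mul_le_div_one_sub_sq hc0 hc1 (by nlinarith)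
    (by nlinarith [sq_nonneg (r - ⟪u, x⟫)])

end UnitVectors

/-- Normalization perturbation bound on the unit sphere of a real inner product
space: if `‖X*‖ = 1`, `Y ≠ 0`, `‖Y − X*‖ < 1` and `sin φ = ‖Y − X*‖` with
`φ ∈ [0, π/2)`, then `‖Y/‖Y‖ − X*‖ ≤ (1/cos φ)·‖Y − X*‖`, equivalently
`‖Y/‖Y‖ − X*‖ ≤ ‖Y − X*‖ / √(1 − ‖Y − X*‖²)`. -/
theorem normalization_perturbation_bound {H : Type*} [NormedAddCommGroup H]
    [InnerProductSpace ℝ H] (Xs Y : H)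
    (hXs : ‖Xs‖ = 1) (hY : Y ≠ 0) (hclose : ‖Y - Xs‖ < 1)
    (φ : ℝ) (hφ0 : 0 ≤ φ) (hφπ : φ < Real.pi / 2)
    (hφ : Real.sin φ = ‖Y - Xs‖) :
    ‖‖Y‖⁻¹ • Y - Xs‖ ≤ (1 / Real.cos φ) * ‖Y - Xs‖ ∧
    ‖‖Y‖⁻¹ • Y - Xs‖ ≤ ‖Y - Xs‖ / Real.sqrt (1 - ‖Y - Xs‖ ^ 2) := by
  have hY' : ‖Y‖ ≠ 0 := norm_ne_zero_iff.2 hY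
  have hunit : ‖‖Y‖⁻¹ • Y‖ = 1 := by rw [norm_smul, norm_inv, norm_norm, inv_mul_cancel₀ hY']
  have hsq : ‖‖Y‖⁻¹ • Y - Xs‖ ^ 2 ≤ ‖Y - Xs‖ ^ 2 / (1 - ‖Y - Xs‖ ^ 2) :=
    norm_sub_sq_le_of_norm_smul_sub_le hunit hXs (norm_nonneg Y) hclose
      (by rw [smul_inv_smul₀ hY'])
  have hbound : ‖‖Y‖⁻¹ • Y - Xs‖ ≤ ‖Y - Xs‖ / √(1 - ‖Y - Xs‖ ^ 2) :=
    calc ‖‖Y‖⁻¹ • Y - Xs‖ = √(‖‖Y‖⁻¹ • Y - Xs‖ ^ 2) := (sqrt_sq (norm_nonneg _)).symm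
      _ ≤ √(‖Y - Xs‖ ^ 2 / (1 - ‖Y - Xs‖ ^ 2)) := sqrt_le_sqrt hsq
      _ = ‖Y - Xs‖ / √(1 - ‖Y - Xs‖ ^ 2) := by
        rw [sqrt_div (sq_nonneg _), sqrt_sq (norm_nonneg _)]
  have hcos : cos φ = √(1 - ‖Y - Xs‖ ^ 2) := by
    rw [cos_eq_sqrt_one_sub_sin_sq (by linarith [pi_pos]) hφπ.le, hφ]
  exact ⟨by rwa [hcos, one_div_mul_eq_div], hbound⟩
end

section
/- Let M be a subspace of ℝ^{m×n}, let X* ∈ M have rank r and ‖X*‖_F = 1, and let P ∈ ℝ^{m×m} and Q ∈ ℝ^{n×n} be the orthogonal projections onto the orthogonal complements of the column space of X* and of the column space of X*ᵀ, respectively. If the nontangential intersection condition holds, i.e., every X ∈ M with P X Q = 0 is a scalar multiple of X*, then X* is an isolated point of the set {X ∈ M : rank(X) ≤ r, ‖X‖_F = 1}: there exists δ > 0 such that the only matrices X with X ∈ M, rank(X) ≤ r, ‖X‖_F = 1 and ‖X − X*‖_F < δ are X = X* itself. -/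
open Matrix

/-!
Write `E = X - X*`. Choose `A`, `B` with `A X* B = 1`. For `X` of rank `≤ r` close to `X*`, the
matrix `A X B` stays invertible with bounded inverse, and the skeleton identity
`X = X B (A X B)⁻¹ A X` together with `P X* = 0 = X* Q` gives `P X Q = (P E B) (A X B)⁻¹ (A E Q)`,
so `‖P X Q‖ = O(‖E‖²)`. Nontangentiality makes `Y ↦ P Y Q` injective on a complement of `ℝ X*`
in `M`, so `E = t X* + W` with `‖W‖ = O(‖P X Q‖) = O(‖E‖²)`. As `‖X‖ = ‖X*‖ = 1`, `|t| ≤ ‖W‖`,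
hence `‖E‖ = O(‖E‖²)`, which forces `E = 0` near `X*`.
-/

open Filter Topology Asymptotics
open scoped NNReal Matrix.Norms.Frobenius

section NormedSpace

variable {𝕜 E F : Type*} [NontriviallyNormedField 𝕜] [CompleteSpace 𝕜]
  [NormedAddCommGroup E] [NormedSpace 𝕜 E] [FiniteDimensional 𝕜 E]
  [NormedAddCommGroup F] [NormedSpace 𝕜 F]

theorem exists_norm_sub_smul_le_mul_norm {M : Submodule 𝕜 E} {x : E} (hx : x ≠ 0) (hxM : x ∈ M)
    {L : E →ₗ[𝕜] F} (hLx : L x = 0) (hker : ∀ y ∈ M, L y = 0 → ∃ c : 𝕜, y = c • x) :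
    ∃ K : ℝ≥0, ∀ y ∈ M, ∃ t : 𝕜, ‖y - t • x‖ ≤ K * ‖L y‖ := by
  obtain ⟨φ, hφ⟩ := Module.Projective.exists_dual_eq_one 𝕜 hx
  set N := M ⊓ LinearMap.ker φ
  have hinj : LinearMap.ker (L ∘ₗ N.subtype) = ⊥ := by
    rw [LinearMap.ker_eq_bot']
    rintro ⟨w, hwM, hwφ⟩ hLw
    obtain ⟨c, rfl⟩ := hker w hwM hLw
    have hc : c = 0 := by simpa [hφ] using hwφ
    simp [hc]
  obtain ⟨K, -, hK⟩ := (L ∘ₗ N.subtype).exists_antilipschitzWith hinj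
  refine ⟨K, fun y hy => ⟨φ y, ?_⟩⟩
  have hw : y - φ y • x ∈ N := ⟨M.sub_mem hy (M.smul_mem _ hxM), by simp [hφ]⟩
  simpa [hLx, dist_eq_norm] using hK.le_mul_dist ⟨_, hw⟩ 0

end NormedSpace

section RealNormedSpace

variable {E F : Type*} [NormedAddCommGroup E] [NormedSpace ℝ E]

theorem abs_le_norm_of_norm_smul_add_eq_one {x w : E} {t : ℝ} (hx : ‖x‖ = 1) (ht : -1 ≤ t)
    (h : ‖(1 + t) • x + w‖ = 1) : |t| ≤ ‖w‖ := by
  have hnorm : ‖(1 + t) • x‖ = 1 + t := by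
    rw [norm_smul, hx, mul_one, Real.norm_of_nonneg (by linarith)]
  have := abs_norm_sub_norm_le ((1 + t) • x + w) ((1 + t) • x)
  rwa [h, hnorm, add_sub_cancel_left, show 1 - (1 + t) = -t by ring, abs_neg] at this

variable [FiniteDimensional ℝ E] [NormedAddCommGroup F] [NormedSpace ℝ F]

theorem eventually_eq_of_norm_eq_one_of_isLittleO {M : Submodule ℝ E} {x : E} (hxM : x ∈ M)
    (hx : ‖x‖ = 1) {L : E →ₗ[ℝ] F} (hLx : L x = 0)
    (hker : ∀ y ∈ M, L y = 0 → ∃ c : ℝ, y = c • x) {S : Set E}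
    (hL : (fun y => L y) =o[𝓝[S] x] fun y => y - x) :
    ∀ᶠ y in 𝓝[S] x, y ∈ M → ‖y‖ = 1 → y = x := by
  obtain ⟨K, hK⟩ :=
    exists_norm_sub_smul_le_mul_norm (norm_ne_zero_iff.1 (by simp [hx])) hxM hLx hker
  have hnear : ∀ᶠ y in 𝓝[S] x, ‖y - x‖ < 1 / 2 :=
    nhdsWithin_le_nhds (tendsto_iff_norm_sub_tendsto_zero.1 tendsto_id |>.eventually_lt_const
      one_half_pos)
  filter_upwards [hL.def (c := 1 / (4 * (K + 1))) (by positivity), hnear]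
    with y hLy hyx hyM hy
  obtain ⟨t, ht⟩ := hK (y - x) (M.sub_mem hyM hxM)
  set w := y - x - t • x
  have hw : ‖w‖ ≤ ‖y - x‖ / 4 := by
    have hLyx : L (y - x) = L y := by simp [hLx]
    calc ‖w‖ ≤ K * ‖L y‖ := hLyx ▸ ht
      _ ≤ K * (1 / (4 * (K + 1)) * ‖y - x‖) := by gcongr
      _ = K / (4 * (K + 1)) * ‖y - x‖ := by ring
      _ ≤ 1 / 4 * ‖y - x‖ := by
        refine mul_le_mul_of_nonneg_right ?_ (norm_nonneg _)
        rw [div_le_iff₀ (by positivity)]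
        linarith
      _ = ‖y - x‖ / 4 := by ring
  have ht_le : |t| ≤ ‖y - x‖ + ‖w‖ := by
    calc |t| = ‖t • x‖ := by rw [norm_smul, hx, mul_one, Real.norm_eq_abs]
      _ = ‖y - x - w‖ := by simp [w]
      _ ≤ ‖y - x‖ + ‖w‖ := norm_sub_le _ _
  have hy_eq : (1 + t) • x + w = y := by simp only [w, add_smul, one_smul]; abel
  have ht_abs := abs_le_norm_of_norm_smul_add_eq_one hx (by linarith [neg_abs_le t]) (hy_eq ▸ hy)
  have hyx_le : ‖y - x‖ ≤ |t| + ‖w‖ := by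
    simpa [norm_smul, hx, w] using norm_add_le (t • x) w
  exact sub_eq_zero.1 (norm_le_zero_iff.1 (by linarith))

end RealNormedSpace

namespace Matrix

variable {K : Type*} [Field K] {l m n : Type*} [Fintype m] [Fintype n]

theorem mul_eq_zero_of_range_le_ker {R : Type*} [CommRing R] (P : Matrix l m R) (X : Matrix m n R)
    (h : LinearMap.range X.mulVecLin ≤ LinearMap.ker P.mulVecLin) : P * X = 0 := by
  rw [LinearMap.range_le_ker_iff, ← mulVecLin_mul] at h
  exact ext_iff_mulVec.2 fun v => by simpa using LinearMap.congr_fun h v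

theorem exists_mul_mul_eq_one [DecidableEq m] [DecidableEq n] (X : Matrix m n K) :
    ∃ (A : Matrix (Fin X.rank) m K) (B : Matrix n (Fin X.rank) K), A * X * B = 1 := by
  -- `X` factors through its range `V ≃ K ^ rank X`: take a left inverse of the inclusion of `V`
  -- and a right inverse of the corestriction of `X` to `V`.
  set V := LinearMap.range X.mulVecLin
  let e : V ≃ₗ[K] (Fin X.rank → K) := LinearEquiv.ofFinrankEq _ _ (Module.finrank_fin_fun K).symm
  obtain ⟨g, hg⟩ := V.subtype.exists_leftInverse_of_injective V.ker_subtype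
  obtain ⟨h, hh⟩ := X.mulVecLin.rangeRestrict.exists_rightInverse_of_surjective
    X.mulVecLin.range_rangeRestrict
  refine ⟨LinearMap.toMatrix' (e ∘ₗ g), LinearMap.toMatrix' (h ∘ₗ e.symm), toLin'.injective ?_⟩
  refine LinearMap.ext fun v => ?_
  have hXh : X *ᵥ h (e.symm v) = V.subtype (e.symm v) :=
    congrArg V.subtype (LinearMap.congr_fun hh (e.symm v))
  have hgV : ∀ y, g (V.subtype y) = y := LinearMap.congr_fun hg
  simp only [toLin'_mul, toLin'_toMatrix', toLin'_one, LinearMap.comp_apply, LinearMap.id_apply,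
    toLin'_apply, LinearEquiv.coe_coe, hXh, hgV, LinearEquiv.apply_symm_apply]

theorem eq_mul_inv_mul_of_rank_le [Fintype l] [DecidableEq l] (X : Matrix m n K) (A : Matrix l m K)
    (B : Matrix n l K) (hX : X.rank ≤ Fintype.card l) (hG : IsUnit (A * X * B)) :
    X = X * B * (A * X * B)⁻¹ * (A * X) := by
  have hrange : LinearMap.range (X * B).mulVecLin = LinearMap.range X.mulVecLin := by
    refine Submodule.eq_of_le_of_finrank_le ?_ ?_
    · rw [mulVecLin_mul]; exact LinearMap.range_comp_le_range _ _
    · calc X.rank ≤ Fintype.card l := hX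
        _ = (A * (X * B)).rank := by rw [← Matrix.mul_assoc, rank_of_isUnit _ hG]
        _ ≤ (X * B).rank := rank_mul_le_right _ _
  refine ext_iff_mulVec.2 fun v => ?_
  obtain ⟨w, hw⟩ : X *ᵥ v ∈ LinearMap.range (X * B).mulVecLin := hrange ▸ ⟨v, rfl⟩
  change (X * B) *ᵥ w = X *ᵥ v at hw
  have hinv : (A * X * B)⁻¹ * (A * X * B) = 1 :=
    nonsing_inv_mul _ ((isUnit_iff_isUnit_det _).1 hG)
  calc X *ᵥ v = (X * B * ((A * X * B)⁻¹ * (A * X * B))) *ᵥ w := by rw [hinv, Matrix.mul_one, hw]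
    _ = _ := by simp only [← mulVec_mulVec, Matrix.mul_assoc, hw]

section Frobenius

variable {𝕜 : Type*} [RCLike 𝕜] {o p : Type*} [Fintype o] [Fintype p]

theorem frobenius_norm_mul₃_le [Fintype l] (A : Matrix l m 𝕜) (B : Matrix m n 𝕜)
    (C : Matrix n o 𝕜) :
    ‖A * B * C‖ ≤ ‖A‖ * ‖B‖ * ‖C‖ :=
  (frobenius_norm_mul _ _).trans (by gcongr; exact frobenius_norm_mul _ _)

theorem isBigO_mul_mul_norm_sub_sq [DecidableEq m] [DecidableEq n] (X₀ : Matrix m n 𝕜)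
    (P : Matrix p m 𝕜) (Q : Matrix n o 𝕜) (hP : P * X₀ = 0) (hQ : X₀ * Q = 0) :
    (fun X => P * X * Q) =O[𝓝[{X | X.rank ≤ X₀.rank}] X₀] fun X => ‖X - X₀‖ ^ 2 := by
  obtain ⟨A, B, hAB⟩ := X₀.exists_mul_mul_eq_one
  have hcont : ContinuousAt (fun X => A * X * B) X₀ := by fun_prop
  have hinv : ContinuousAt (fun X => Ring.inverse (A * X * B)) X₀ := by
    refine ContinuousAt.comp (g := Ring.inverse) ?_ hcont
    rw [hAB]
    exact NormedRing.inverse_continuousAt 1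
  have hunit : ∀ᶠ X in 𝓝 X₀, IsUnit (A * X * B) :=
    hcont.preimage_mem_nhds <| (Units.isOpen (R := Matrix (Fin X₀.rank) (Fin X₀.rank) 𝕜)).mem_nhds
      (by rw [hAB]; exact isUnit_one)
  set c := ‖Ring.inverse (A * X₀ * B)‖ + 1
  have hbound : ∀ᶠ X in 𝓝 X₀, ‖Ring.inverse (A * X * B)‖ < c :=
    hinv.norm.eventually_lt_const (lt_add_one _)
  refine IsBigO.of_bound (‖P‖ * ‖B‖ * c * (‖A‖ * ‖Q‖)) ?_
  filter_upwards [nhdsWithin_le_nhds (hunit.and hbound), self_mem_nhdsWithin]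
    with X ⟨hXunit, hXinv⟩ (hXrank : X.rank ≤ X₀.rank)
  have hcur := X.eq_mul_inv_mul_of_rank_le A B (by simpa using hXrank) hXunit
  have hPX : P * X = P * (X - X₀) := by rw [Matrix.mul_sub, hP, sub_zero]
  have hXQ : X * Q = (X - X₀) * Q := by rw [Matrix.sub_mul, hQ, sub_zero]
  have hPXQ : P * X * Q = P * (X - X₀) * B * (A * X * B)⁻¹ * (A * (X - X₀) * Q) := by
    conv_lhs => rw [hcur]
    simp only [← Matrix.mul_assoc, hPX]
    simp only [Matrix.mul_assoc, hXQ]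
  rw [hPXQ, norm_pow, norm_norm, nonsing_inv_eq_ringInverse]
  calc _ ≤ ‖P * (X - X₀) * B‖ * ‖Ring.inverse (A * X * B)‖ * ‖A * (X - X₀) * Q‖ :=
        frobenius_norm_mul₃_le _ _ _
    _ ≤ (‖P‖ * ‖X - X₀‖ * ‖B‖) * c * (‖A‖ * ‖X - X₀‖ * ‖Q‖) := by
        gcongr <;> exact frobenius_norm_mul₃_le _ _ _
    _ = _ := by ring

end Frobenius

end Matrix

theorem frobNorm_eq_norm {m n : ℕ} (X : Matrix (Fin m) (Fin n) ℝ) : frobNorm X = ‖X‖ := by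
  rw [frobNorm, frobenius_norm_def, Real.sqrt_eq_rpow]
  simp_rw [Real.norm_eq_abs, Real.rpow_two, sq_abs]

theorem isolated_of_nontangential_general {m n r : ℕ}
    (M : Submodule ℝ (Matrix (Fin m) (Fin n) ℝ))
    (Xs : Matrix (Fin m) (Fin n) ℝ) (hXsM : Xs ∈ M)
    (hrank : Xs.rank = r) (hnorm : frobNorm Xs = 1)
    (P : Matrix (Fin m) (Fin m) ℝ) (Q : Matrix (Fin n) (Fin n) ℝ)
    (hPker : ∀ v : Fin m → ℝ, P.mulVec v = 0 ↔ v ∈ LinearMap.range Xs.mulVecLin)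
    (hQsymm : Qᵀ = Q)
    (hQker : ∀ v : Fin n → ℝ, Q.mulVec v = 0 ↔ v ∈ LinearMap.range Xsᵀ.mulVecLin)
    (hNT : ∀ X ∈ M, P * X * Q = 0 → ∃ c : ℝ, X = c • Xs) :
    ∃ δ : ℝ, 0 < δ ∧
      ∀ X ∈ M, X.rank ≤ r → frobNorm X = 1 → frobNorm (X - Xs) < δ → X = Xs := by
  subst hrank
  have hPXs : P * Xs = 0 := mul_eq_zero_of_range_le_ker P Xs fun v hv => (hPker v).2 hv
  have hXsQ : Xs * Q = 0 := by
    have hQXs := mul_eq_zero_of_range_le_ker Q Xsᵀ fun v hv => (hQker v).2 hv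
    simpa [hQsymm] using congrArg transpose hQXs
  let L := mulRightLinearMap (Fin m) ℝ Q ∘ₗ mulLeftLinearMap (Fin n) ℝ P
  have hL : (fun X => L X) =o[𝓝[{X | X.rank ≤ Xs.rank}] Xs] fun X => X - Xs :=
    (isBigO_mul_mul_norm_sub_sq Xs P Q hPXs hXsQ).trans_isLittleO
      ((isLittleO_pow_sub_sub Xs one_lt_two).mono nhdsWithin_le_nhds)
  have hiso := eventually_eq_of_norm_eq_one_of_isLittleO hXsM (frobNorm_eq_norm Xs ▸ hnorm)
    (by simp [L, hPXs]) hNT hL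
  obtain ⟨δ, hδ, hball⟩ := Metric.eventually_nhds_iff.1 (eventually_nhdsWithin_iff.1 hiso)
  refine ⟨δ, hδ, fun X hXM hXr hX hXδ => hball ?_ hXr hXM (frobNorm_eq_norm X ▸ hX)⟩
  rwa [dist_eq_norm, ← frobNorm_eq_norm]

/-- Under the nontangential intersection condition, `X*` is an isolated point of
the set of unit-Frobenius-norm matrices of rank at most `r` in `M`: there is
`δ > 0` such that the only `X ∈ M` with `rank X ≤ r`, `‖X‖_F = 1` and
`‖X − X*‖_F < δ` is `X = X*`. -/
theorem isolated_of_nontangential {m n r : ℕ}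
    (M : Submodule ℝ (Matrix (Fin m) (Fin n) ℝ))
    (Xs : Matrix (Fin m) (Fin n) ℝ) (hXsM : Xs ∈ M)
    (hrank : Xs.rank = r) (hnorm : frobNorm Xs = 1)
    (P : Matrix (Fin m) (Fin m) ℝ) (Q : Matrix (Fin n) (Fin n) ℝ)
    (hPsymm : Pᵀ = P) (hPidem : P * P = P)
    (hPker : ∀ v : Fin m → ℝ, P.mulVec v = 0 ↔ v ∈ LinearMap.range Xs.mulVecLin)
    (hQsymm : Qᵀ = Q) (hQidem : Q * Q = Q)
    (hQker : ∀ v : Fin n → ℝ, Q.mulVec v = 0 ↔ v ∈ LinearMap.range Xsᵀ.mulVecLin)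
    (hNT : ∀ X ∈ M, P * X * Q = 0 → ∃ c : ℝ, X = c • Xs) :
    ∃ δ : ℝ, 0 < δ ∧
      ∀ X ∈ M, X.rank ≤ r → frobNorm X = 1 → frobNorm (X - Xs) < δ → X = Xs :=
  isolated_of_nontangential_general M Xs hXsM hrank hnorm P Q hPker hQsymm hQker hNT
end
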